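/- arXiv:2410.18604 — 2 statements merged into one kernel-verified Lean document; each statement's English description precedes it below -/
import Mathlib

section
/- For all i, j ∈ I with a_{ij} = −1 and every m ∈ ℤ, one has σ_i(σ_j(σ_i(E_{i,m}))) = E_{j,m+1}K_{j,m}^{−1} in 𝒜. -/
/-!
Braid group action on the twisted semi-derived Hall algebra (Contu, arXiv:2410.18604).

We work with the algebra `𝒜 = 𝒮𝒟ℋ_tw(C^b(𝒫))` given by its presentation
(Proposition `prop_presenentation_semiderived_E_i` of the paper): generators
`E_{i,m}`, `K_{i,m}`, `K_{i,m}⁻¹` (`i ∈ I`, `m ∈ ℤ`) over `F = ℚ(v^{1/2})`,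
subject to the relations (SD0)–(SD5).
-/

noncomputable section

namespace SDHall

/-- The field `ℚ(v^{1/2})` of rational functions over `ℚ` in one indeterminate `v^{1/2}`. -/
abbrev F₀ : Type := RatFunc ℚ

/-- The indeterminate `v^{1/2}`. -/
def sq : F₀ := RatFunc.X

/-- `v := (v^{1/2})²`. -/
def v : F₀ := sq ^ 2

/-- The sign `(-1)^n` for an integer `n`. -/
def sgn (n : ℤ) : ℤ := (((-1 : ℤˣ) ^ n : ℤˣ) : ℤ)

/-- Generators `E_{i,m}`, `K_{i,m}`, `K_{i,m}⁻¹` of the presented algebra. -/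
inductive Gen (I : Type) : Type
  | E : I → ℤ → Gen I
  | K : I → ℤ → Gen I
  | Kinv : I → ℤ → Gen I

variable {I : Type}

def e (i : I) (m : ℤ) : FreeAlgebra F₀ (Gen I) := FreeAlgebra.ι F₀ (Gen.E i m)
def κ (i : I) (m : ℤ) : FreeAlgebra F₀ (Gen I) := FreeAlgebra.ι F₀ (Gen.K i m)
def κ' (i : I) (m : ℤ) : FreeAlgebra F₀ (Gen I) := FreeAlgebra.ι F₀ (Gen.Kinv i m)

/-- The defining relations (SD0)–(SD5) of the twisted semi-derived Hall algebra:
(SD0) `K_{i,m}K_{i,m}⁻¹ = 1 = K_{i,m}⁻¹K_{i,m}`;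
(SD1) each `K_{i,m}` is central;
(SD2) `E_{i,m}E_{j,m} = E_{j,m}E_{i,m}` if `a_{ij} = 0`;
(SD3) `E_{i,m}²E_{j,m} − (v+v⁻¹)E_{i,m}E_{j,m}E_{i,m} + E_{j,m}E_{i,m}² = 0` if `a_{ij} = −1`;
(SD4) `E_{i,m+1}E_{j,m} = v^{a_{ij}}E_{j,m}E_{i,m+1} + δ_{ij}(1−v²)K_{i,m}`
      (split into the cases `i ≠ j` and `i = j`);
(SD5) `E_{j,r}E_{i,l} = v^{−(−1)^{r−l}a_{ij}}E_{i,l}E_{j,r}` for `r > l+1`. -/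
inductive Rel (a : I → I → ℤ) : FreeAlgebra F₀ (Gen I) → FreeAlgebra F₀ (Gen I) → Prop
  | sd0a (i : I) (m : ℤ) : Rel a (κ i m * κ' i m) 1
  | sd0b (i : I) (m : ℤ) : Rel a (κ' i m * κ i m) 1
  | sd1 (i : I) (m : ℤ) (x : FreeAlgebra F₀ (Gen I)) : Rel a (κ i m * x) (x * κ i m)
  | sd2 (i j : I) (m : ℤ) : a i j = 0 → Rel a (e i m * e j m) (e j m * e i m)
  | sd3 (i j : I) (m : ℤ) : a i j = -1 →
      Rel a (e i m ^ 2 * e j m - (v + v⁻¹) • (e i m * e j m * e i m) + e j m * e i m ^ 2) 0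
  | sd4_ne (i j : I) (m : ℤ) : i ≠ j →
      Rel a (e i (m + 1) * e j m) ((v ^ (a i j)) • (e j m * e i (m + 1)))
  | sd4_eq (i : I) (m : ℤ) :
      Rel a (e i (m + 1) * e i m)
        ((v ^ (a i i)) • (e i m * e i (m + 1)) + ((1 : F₀) - v ^ 2) • κ i m)
  | sd5 (i j : I) (r l : ℤ) : r > l + 1 →
      Rel a (e j r * e i l) ((v ^ (-(sgn (r - l)) * a i j)) • (e i l * e j r))

/-- The twisted semi-derived Hall algebra `𝒜`, presented by generators and relations. -/
abbrev A (a : I → I → ℤ) : Type := RingQuot (Rel a)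

/-- The generator `E_{i,m}` of `𝒜`. -/
def E (a : I → I → ℤ) (i : I) (m : ℤ) : A a := RingQuot.mkAlgHom F₀ (Rel a) (e i m)

/-- The generator `K_{i,m}` of `𝒜`. -/
def K (a : I → I → ℤ) (i : I) (m : ℤ) : A a := RingQuot.mkAlgHom F₀ (Rel a) (κ i m)

/-- The generator `K_{i,m}⁻¹` of `𝒜`. -/
def Kinv (a : I → I → ℤ) (i : I) (m : ℤ) : A a := RingQuot.mkAlgHom F₀ (Rel a) (κ' i m)

/-- `a` is a simply-laced generalized Cartan matrix: symmetric, `a_{ii} = 2`,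
and `a_{ij} ∈ {0, −1}` for `i ≠ j`. -/
def IsCartan (a : I → I → ℤ) : Prop :=
  (∀ i j, a i j = a j i) ∧ (∀ i, a i i = 2) ∧ ∀ i j, i ≠ j → a i j = 0 ∨ a i j = -1

/-- The element `(v^{1/2}E_{i,m}E_{j,m} − v^{−1/2}E_{j,m}E_{i,m})/(v − v^{−1})` of `𝒜`. -/
def T (a : I → I → ℤ) (i j : I) (m : ℤ) : A a :=
  (v - v⁻¹)⁻¹ • (sq • (E a i m * E a j m) - sq⁻¹ • (E a j m * E a i m))

/-- The defining formulas for the braid group operator `σᵢ` on the generators: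
`σᵢ(E_{i,m}) = E_{i,m+1}K_{i,m}⁻¹`;
`σᵢ(E_{j,m}) = (v^{1/2}E_{i,m}E_{j,m} − v^{−1/2}E_{j,m}E_{i,m})/(v − v^{−1})` if `a_{ij} = −1`;
`σᵢ(E_{j,m}) = E_{j,m}` if `a_{ij} = 0`;
`σᵢ(K_{i,m}) = K_{i,m}⁻¹`; `σᵢ(K_{j,m}) = K_{i,m}K_{j,m}` if `a_{ij} = −1`;
`σᵢ(K_{j,m}) = K_{j,m}` if `a_{ij} = 0`. -/
def SigmaSpec (a : I → I → ℤ) (i : I) (σ : A a →ₐ[F₀] A a) : Prop :=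
  (∀ m : ℤ, σ (E a i m) = E a i (m + 1) * Kinv a i m) ∧
  (∀ (j : I) (m : ℤ), a i j = -1 → σ (E a j m) = T a i j m) ∧
  (∀ (j : I) (m : ℤ), a i j = 0 → σ (E a j m) = E a j m) ∧
  (∀ m : ℤ, σ (K a i m) = Kinv a i m) ∧
  (∀ (j : I) (m : ℤ), a i j = -1 → σ (K a j m) = K a i m * K a j m) ∧
  (∀ (j : I) (m : ℤ), a i j = 0 → σ (K a j m) = K a j m)

/-- The defining formulas for the inverse operator `σᵢ'` on the generators:
`σᵢ'(E_{i,m}) = E_{i,m−1}K_{i,m−1}⁻¹`;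
`σᵢ'(E_{j,m}) = (v^{1/2}E_{j,m}E_{i,m} − v^{−1/2}E_{i,m}E_{j,m})/(v − v^{−1})` if `a_{ij} = −1`;
`σᵢ'(E_{j,m}) = E_{j,m}` if `a_{ij} = 0`;
`σᵢ'(K_{i,m}) = K_{i,m}⁻¹`; `σᵢ'(K_{j,m}) = K_{i,m}K_{j,m}` if `a_{ij} = −1`;
`σᵢ'(K_{j,m}) = K_{j,m}` if `a_{ij} = 0`. -/
def SigmaSpec' (a : I → I → ℤ) (i : I) (σ : A a →ₐ[F₀] A a) : Prop :=
  (∀ m : ℤ, σ (E a i m) = E a i (m - 1) * Kinv a i (m - 1)) ∧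
  (∀ (j : I) (m : ℤ), a i j = -1 → σ (E a j m) = T a j i m) ∧
  (∀ (j : I) (m : ℤ), a i j = 0 → σ (E a j m) = E a j m) ∧
  (∀ m : ℤ, σ (K a i m) = Kinv a i m) ∧
  (∀ (j : I) (m : ℤ), a i j = -1 → σ (K a j m) = K a i m * K a j m) ∧
  (∀ (j : I) (m : ℤ), a i j = 0 → σ (K a j m) = K a j m)

end SDHall

open SDHall

/-!
Write `[x, y] = (v^{1/2} x y − v^{−1/2} y x)/(v − v⁻¹)`, so that `σᵢ(E_{j,m}) = [E_{i,m}, E_{j,m}]`.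
Since `σⱼ(σᵢ(E_{i,m})) = [E_{j,m+1}, E_{i,m+1}] · K_{i,m}⁻¹K_{j,m}⁻¹`, applying `σᵢ` gives
`[[E_{i,m+1}, E_{j,m+1}], z] · K_{j,m}⁻¹` with `z = σᵢ(E_{i,m+1}) = E_{i,m+2}K_{i,m+1}⁻¹`.
By (SD4) and the centrality of the `K`'s, `z` commutes with `E_{i,m+1}` up to `v²` and a scalar
correction `1 − v²`, and with `E_{j,m+1}` up to `v⁻¹`; for any three such elements of an algebra
the iterated bracket `[[x, y], z]` collapses to `y`.
-/

section QBracket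

variable {k R : Type*} [Field k] [Ring R] [Algebra k R]

def qBracket (s : k) (x y : R) : R :=
  (s ^ 2 - (s ^ 2)⁻¹)⁻¹ • (s • (x * y) - s⁻¹ • (y * x))

lemma map_qBracket {S : Type*} [Ring S] [Algebra k S] (f : R →ₐ[k] S) (s : k) (x y : R) :
    f (qBracket s x y) = qBracket s (f x) (f y) := by
  simp only [qBracket, map_smul, map_sub, map_mul]

theorem qBracket_qBracket_eq_middle {s : k} (hs : s ^ 2 - (s ^ 2)⁻¹ ≠ 0) {x y z : R}
    (hzx : z * x = (s ^ 2) ^ 2 • (x * z) + (1 - (s ^ 2) ^ 2) • 1)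
    (hzy : z * y = (s ^ 2)⁻¹ • (y * z)) :
    qBracket s (qBracket s x y) z = y := by
  -- `0⁻¹ = 0`, so `hs` also rules out `s = 0`
  have hs0 : s ≠ 0 := by rintro rfl; simp at hs
  have hs4 : s ^ 4 - 1 ≠ 0 := fun h => hs (by field_simp; linear_combination h)
  have hzxy : z * (x * y) = (s ^ 2) ^ 2 • (x * (z * y)) + (1 - (s ^ 2) ^ 2) • y := by
    rw [← mul_assoc, hzx, add_mul, smul_mul_assoc, smul_mul_assoc, one_mul, mul_assoc]
  have hzyx : z * (y * x) = (s ^ 2)⁻¹ • (y * (z * x)) := by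
    rw [← mul_assoc, hzy, smul_mul_assoc, mul_assoc]
  simp only [qBracket, mul_sub, sub_mul, smul_mul_assoc, mul_smul_comm, mul_assoc, hzxy, hzyx,
    hzx, hzy, mul_add, mul_one]
  -- the `x y z` and `y x z` terms cancel; the constant terms add up to `(v − v⁻¹)² • y`
  match_scalars <;> field_simp <;> ring

end QBracket

namespace SDHall

variable {I : Type} {a : I → I → ℤ}

lemma sq_sq_sub_inv_ne_zero : sq ^ 2 - (sq ^ 2)⁻¹ ≠ 0 := by
  have h0 : sq ≠ 0 := RatFunc.X_ne_zero
  intro h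
  field_simp at h
  have h4 : algebraMap (Polynomial ℚ) F₀ (Polynomial.X ^ 4) = algebraMap (Polynomial ℚ) F₀ 1 := by
    rw [map_pow, map_one, RatFunc.algebraMap_X]
    change sq ^ 4 = 1
    linear_combination h
  simpa using congrArg Polynomial.natDegree (RatFunc.algebraMap_injective ℚ h4)

lemma T_eq_qBracket (i j : I) (m : ℤ) : T a i j m = qBracket sq (E a i m) (E a j m) := rfl

lemma K_mul_Kinv (i : I) (m : ℤ) : K a i m * Kinv a i m = 1 := by
  simpa only [K, Kinv, map_mul, map_one] using RingQuot.mkAlgHom_rel F₀ (Rel.sd0a (a := a) i m)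

lemma Kinv_mul_K (i : I) (m : ℤ) : Kinv a i m * K a i m = 1 := by
  simpa only [K, Kinv, map_mul, map_one] using RingQuot.mkAlgHom_rel F₀ (Rel.sd0b (a := a) i m)

lemma commute_K (i : I) (m : ℤ) (x : A a) : Commute (K a i m) x := by
  obtain ⟨y, rfl⟩ := RingQuot.mkAlgHom_surjective F₀ (Rel a) x
  change K a i m * _ = _ * K a i m
  simpa only [K, map_mul] using RingQuot.mkAlgHom_rel F₀ (Rel.sd1 (a := a) i m y)

lemma commute_Kinv (i : I) (m : ℤ) (x : A a) : Commute (Kinv a i m) x :=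
  Commute.units_inv_left (u := ⟨K a i m, Kinv a i m, K_mul_Kinv i m, Kinv_mul_K i m⟩)
    (commute_K i m x)

lemma E_succ_mul_Kinv_mul_E_self {i : I} (hii : a i i = 2) (m : ℤ) :
    E a i (m + 1) * Kinv a i m * E a i m
      = v ^ 2 • (E a i m * (E a i (m + 1) * Kinv a i m)) + (1 - v ^ 2) • 1 := by
  have hrel : E a i (m + 1) * E a i m
      = v ^ 2 • (E a i m * E a i (m + 1)) + (1 - v ^ 2) • K a i m := by
    simpa only [E, K, map_mul, map_add, map_smul, hii, zpow_ofNat]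
      using RingQuot.mkAlgHom_rel F₀ (Rel.sd4_eq (a := a) i m)
  rw [mul_assoc, (commute_Kinv i m _).eq, ← mul_assoc, hrel, add_mul, smul_mul_assoc,
    smul_mul_assoc, K_mul_Kinv, mul_assoc]

lemma E_succ_mul_Kinv_mul_E_of_ne {i j : I} (hij : i ≠ j) (m : ℤ) :
    E a i (m + 1) * Kinv a i m * E a j m
      = v ^ a i j • (E a j m * (E a i (m + 1) * Kinv a i m)) := by
  have hrel : E a i (m + 1) * E a j m = v ^ a i j • (E a j m * E a i (m + 1)) := by
    simpa only [E, map_mul, map_smul] using RingQuot.mkAlgHom_rel F₀ (Rel.sd4_ne (a := a) i j m hij)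
  rw [mul_assoc, (commute_Kinv i m _).eq, ← mul_assoc, hrel, smul_mul_assoc, mul_assoc]

lemma map_Kinv_eq_of_mul_eq_one (σ : A a →ₐ[F₀] A a) {i : I} {m : ℤ} {w : A a}
    (h : σ (K a i m) * w = 1) : σ (Kinv a i m) = w :=
  left_inv_eq_right_inv (by rw [← map_mul, Kinv_mul_K, map_one]) h

namespace SigmaSpec

variable {σ : A a →ₐ[F₀] A a} {i j : I}

lemma map_Kinv_self (h : SigmaSpec a i σ) (m : ℤ) : σ (Kinv a i m) = K a i m :=
  map_Kinv_eq_of_mul_eq_one σ (by rw [h.2.2.2.1, Kinv_mul_K])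

lemma map_Kinv_of_eq_neg_one (h : SigmaSpec a i σ) (hij : a i j = -1) (m : ℤ) :
    σ (Kinv a j m) = Kinv a j m * Kinv a i m :=
  map_Kinv_eq_of_mul_eq_one σ <| by
    rw [h.2.2.2.2.1 j m hij, mul_assoc, ← mul_assoc (K a j m), K_mul_Kinv, one_mul, K_mul_Kinv]

lemma map_T_eq_E (h : SigmaSpec a i σ) (hii : a i i = 2) (hij : a i j = -1) (m : ℤ) :
    σ (T a j i m) = E a j m := by
  have hne : i ≠ j := by rintro rfl; omega
  have hzy := E_succ_mul_Kinv_mul_E_of_ne (a := a) hne m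
  rw [hij, zpow_neg_one] at hzy
  rw [T_eq_qBracket, map_qBracket, h.2.1 j m hij, h.1 m, T_eq_qBracket]
  exact qBracket_qBracket_eq_middle sq_sq_sub_inv_ne_zero (E_succ_mul_Kinv_mul_E_self hii m) hzy

end SigmaSpec

end SDHall

theorem sigma_braid_on_E_general (I : Type) (a : I → I → ℤ)
    (hA : IsCartan a) (i j : I) (hij : a i j = -1)
    (σi σj : A a →ₐ[F₀] A a) (hi : SigmaSpec a i σi) (hj : SigmaSpec a j σj) (m : ℤ) :
    σi (σj (σi (E a i m))) = E a j (m + 1) * Kinv a j m := by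
  obtain ⟨hsym, hdiag, -⟩ := hA
  have hji : a j i = -1 := (hsym j i).trans hij
  calc σi (σj (σi (E a i m)))
      = σi (T a j i (m + 1) * (Kinv a i m * Kinv a j m)) := by
        rw [hi.1, map_mul, hj.2.1 i _ hji, hj.map_Kinv_of_eq_neg_one hji]
    _ = E a j (m + 1) * (K a i m * (Kinv a j m * Kinv a i m)) := by
        rw [map_mul, hi.map_T_eq_E (hdiag i) hij, map_mul, hi.map_Kinv_self,
          hi.map_Kinv_of_eq_neg_one hij]
    _ = E a j (m + 1) * Kinv a j m := by
        rw [(commute_K i m _).left_comm, K_mul_Kinv, mul_one]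

/-- For `a_{ij} = −1` and `m ∈ ℤ`,
`σᵢ(σⱼ(σᵢ(E_{i,m}))) = E_{j,m+1}K_{j,m}⁻¹` in `𝒜`. -/
theorem sigma_braid_on_E (I : Type) [Fintype I] (a : I → I → ℤ)
    (hA : IsCartan a) (i j : I) (hij : a i j = -1)
    (σi σj : A a →ₐ[F₀] A a) (hi : SigmaSpec a i σi) (hj : SigmaSpec a j σj) (m : ℤ) :
    σi (σj (σi (E a i m))) = E a j (m + 1) * Kinv a j m :=
  sigma_braid_on_E_general I a hA i j hij σi σj hi hj m
end
end

section
/- Let i, j, k ∈ I with a_{ik} = −1 and a_{jk} = −1, and let r, l ∈ ℤ with r > l + 1. Set F_{i,r} := (v^{1/2}E_{k,r}E_{i,r} − v^{−1/2}E_{i,r}E_{k,r})/(v − v^{−1}) and F_{j,l} := (v^{1/2}E_{k,l}E_{j,l} − v^{−1/2}E_{j,l}E_{k,l})/(v − v^{−1}) in 𝒜. Then F_{i,r} F_{j,l} = v^{−(−1)^{r−l}a_{ij}} F_{j,l} F_{i,r}. (This is the verification that σ_k preserves relation (SD5) in the case a_{ik} = a_{jk} = −1.) -/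
/-!
Braid group action on the twisted semi-derived Hall algebra (Contu, arXiv:2410.18604).

We work with the algebra `𝒜 = 𝒮𝒟ℋ_tw(C^b(𝒫))` given by its presentation
(Proposition `prop_presenentation_semiderived_E_i` of the paper): generators
`E_{i,m}`, `K_{i,m}`, `K_{i,m}⁻¹` (`i ∈ I`, `m ∈ ℤ`) over `F = ℚ(v^{1/2})`,
subject to the relations (SD0)–(SD5).
-/

noncomputable section

open SDHall

lemma v_ne_zero : (v : F₀) ≠ 0 :=
  pow_ne_zero 2 (RatFunc.X_ne_zero)

/-- Commutation of single generators, from (SD5). -/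
lemma gen_comm {I : Type} (a : I → I → ℤ) (x y : I) {r l : ℤ} (h : r > l + 1) :
    E a x r * E a y l = (v ^ (-(sgn (r - l)) * a y x)) • (E a y l * E a x r) := by
  have h5 := RingQuot.mkAlgHom_rel F₀ (Rel.sd5 (a := a) y x r l h)
  simpa only [E, map_mul, map_smul] using h5

/-- Commutation of products of two generators in degree `r` past products of two
generators in degree `l`. -/
lemma prod_comm {I : Type} (a : I → I → ℤ) (w x y z : I) {r l : ℤ} (h : r > l + 1) :
    (E a w r * E a x r) * (E a y l * E a z l)
      = (v ^ (-(sgn (r - l)) * (a y w + a y x + a z w + a z x)))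
          • ((E a y l * E a z l) * (E a w r * E a x r)) := by
  have hxy := gen_comm a x y h
  have hxz := gen_comm a x z h
  have hwy := gen_comm a w y h
  have hwz := gen_comm a w z h
  calc (E a w r * E a x r) * (E a y l * E a z l)
      = E a w r * (E a x r * E a y l) * E a z l := by
        simp only [mul_assoc]
    _ = (v ^ (-(sgn (r - l)) * a y x)) • (E a w r * E a y l * (E a x r * E a z l)) := by
        rw [hxy]; simp only [smul_mul_assoc, mul_smul_comm, smul_smul, mul_assoc]
    _ = (v ^ (-(sgn (r - l)) * a y x) * v ^ (-(sgn (r - l)) * a z x))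
          • ((E a w r * E a y l) * E a z l * E a x r) := by
        rw [hxz]; simp only [smul_mul_assoc, mul_smul_comm, smul_smul, mul_assoc]
    _ = (v ^ (-(sgn (r - l)) * a y x) * v ^ (-(sgn (r - l)) * a z x)
          * v ^ (-(sgn (r - l)) * a y w))
          • (E a y l * (E a w r * E a z l) * E a x r) := by
        rw [hwy]; simp only [smul_mul_assoc, mul_smul_comm, smul_smul, mul_assoc]
    _ = (v ^ (-(sgn (r - l)) * a y x) * v ^ (-(sgn (r - l)) * a z x)
          * v ^ (-(sgn (r - l)) * a y w) * v ^ (-(sgn (r - l)) * a z w))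
          • ((E a y l * E a z l) * (E a w r * E a x r)) := by
        rw [hwz]; simp only [smul_mul_assoc, mul_smul_comm, smul_smul, mul_assoc]
    _ = (v ^ (-(sgn (r - l)) * (a y w + a y x + a z w + a z x)))
          • ((E a y l * E a z l) * (E a w r * E a x r)) := by
        have hsum : (-(sgn (r - l)) * a y x) + (-(sgn (r - l)) * a z x)
            + (-(sgn (r - l)) * a y w) + (-(sgn (r - l)) * a z w)
            = -(sgn (r - l)) * (a y w + a y x + a z w + a z x) := by ring
        rw [← hsum, zpow_add₀ v_ne_zero, zpow_add₀ v_ne_zero, zpow_add₀ v_ne_zero]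

/-- For `a_{ik} = −1`, `a_{jk} = −1` and `r > l + 1`, set
`F_{i,r} := (v^{1/2}E_{k,r}E_{i,r} − v^{−1/2}E_{i,r}E_{k,r})/(v − v^{−1})` and
`F_{j,l} := (v^{1/2}E_{k,l}E_{j,l} − v^{−1/2}E_{j,l}E_{k,l})/(v − v^{−1})`. Then
`F_{i,r}F_{j,l} = v^{−(−1)^{r−l}a_{ij}}F_{j,l}F_{i,r}` in `𝒜`.
(Verification that `σ_k` preserves (SD5) in the case `a_{ik} = a_{jk} = −1`.) -/
theorem sd5_preserved_far_apart (I : Type) [Fintype I] (a : I → I → ℤ)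
    (hA : IsCartan a) (i j k : I) (hik : a i k = -1) (hjk : a j k = -1)
    (r l : ℤ) (hrl : r > l + 1) :
    T a k i r * T a k j l
      = (v ^ (-(sgn (r - l)) * a i j)) • (T a k j l * T a k i r) := by
  obtain ⟨hsym, hdiag, _⟩ := hA
  have hki : a k i = -1 := by rw [← hsym]; exact hik
  have hkk : a k k = 2 := hdiag k
  have hji : a j i = a i j := hsym j i
  have e1 : a k k + a k i + a j k + a j i = a i j := by omega
  have e2 : a k i + a k k + a j i + a j k = a i j := by omega
  have e3 : a j k + a j i + a k k + a k i = a i j := by omega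
  have e4 : a j i + a j k + a k i + a k k = a i j := by omega
  have h11 := prod_comm a k i k j hrl
  have h12 := prod_comm a k i j k hrl
  have h21 := prod_comm a i k k j hrl
  have h22 := prod_comm a i k j k hrl
  rw [e1] at h11; rw [e3] at h12; rw [e2] at h21; rw [e4] at h22
  unfold T
  simp only [mul_sub, sub_mul, smul_mul_assoc, mul_smul_comm, smul_sub, smul_smul,
    h11, h12, h21, h22]
  rw [sub_sub_sub_comm]
  congr 1 <;> congr 1 <;> congr 1 <;> ring
end
end
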